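/- arXiv:1710.03214 — 4 statements merged into one kernel-verified Lean document; each statement's English description precedes it below -/
import Mathlib

section
/- Let F be a field, let μ₁,...,μ_d be distinct nonzero elements of F, and let y₁,...,y_d be indeterminates. Then the d×d matrix A over the rational function field F(y₁,...,y_d), with (i,j)-th entry 1/(y_i - μ_j)², has nonzero determinant. -/
/-!
Clearing the denominators of row `i` multiplies `det A` by `∏ₖ (yᵢ - μₖ)²` and turns `A` into the
polynomial matrix `P i j = ∏_{k ≠ j} (Xᵢ - μₖ)²`. Specialising `Xᵢ ↦ μᵢ` kills every off-diagonal
entry of `P`, so `det P` evaluates to `∏ᵢ ∏_{k ≠ i} (μᵢ - μₖ)²`, which is nonzero because the `μᵢ`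
are distinct.
-/

open Matrix Finset MvPolynomial

theorem MvPolynomial.X_sub_C_ne_zero {σ R : Type*} [CommRing R] [Nontrivial R] (i : σ) (a : R) :
    (X i - C a : MvPolynomial σ R) ≠ 0 := by
  rw [sub_ne_zero]
  intro h
  simpa using congrArg totalDegree h

namespace Matrix

variable {ι : Type*} [Fintype ι] [DecidableEq ι]

theorem det_of_prod_erase {R : Type*} [CommRing R] (g : ι → ι → R) (hg : ∀ i, g i i = 0) :
    det (of fun i j => ∏ k ∈ univ.erase j, g i k) = ∏ i, ∏ k ∈ univ.erase i, g i k := by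
  have hdiag : (of fun i j => ∏ k ∈ univ.erase j, g i k) =
      diagonal fun i => ∏ k ∈ univ.erase i, g i k := by
    ext i j
    rcases eq_or_ne i j with rfl | hij
    · simp
    · simp [hij, prod_eq_zero (mem_erase.2 ⟨hij, mem_univ i⟩) (hg i)]
  rw [hdiag, det_diagonal]

theorem det_of_prod_erase_sq_sub_ne_zero {K : Type*} [Field K] {a : ι → K}
    (ha : Function.Injective a) :
    det (of fun i j => ∏ k ∈ univ.erase j, (a i - a k) ^ 2) ≠ 0 := by
  rw [det_of_prod_erase _ fun i => by simp]
  exact prod_ne_zero_iff.2 fun i _ => prod_ne_zero_iff.2 fun k hk =>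
    pow_ne_zero _ (sub_ne_zero.2 (ha.ne (ne_of_mem_erase hk).symm))

theorem det_of_inv_mul_prod {K : Type*} [Field K] (g : ι → ι → K) (hg : ∀ i j, g i j ≠ 0) :
    det (of fun i j => (g i j)⁻¹) * ∏ i, ∏ k, g i k =
      det (of fun i j => ∏ k ∈ univ.erase j, g i k) := by
  rw [mul_comm, ← det_mul_column]
  congr 1
  ext i j
  simp only [of_apply]
  rw [← mul_prod_erase univ (g i) (mem_univ j), mul_comm (g i j), mul_assoc,
    mul_inv_cancel₀ (hg i j), mul_one]

end Matrix

theorem stmt0_general (F : Type*) [Field F] (d : ℕ)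
    (μ : Fin d → F) (hinj : Function.Injective μ) :
    let K := FractionRing (MvPolynomial (Fin d) F)
    let y : Fin d → K := fun i => algebraMap (MvPolynomial (Fin d) F) K (MvPolynomial.X i)
    let c : Fin d → K := fun j => algebraMap (MvPolynomial (Fin d) F) K (MvPolynomial.C (μ j))
    Matrix.det (Matrix.of fun i j => ((y i - c j) ^ 2)⁻¹) ≠ 0 := by
  intro K y c
  let P : Matrix (Fin d) (Fin d) (MvPolynomial (Fin d) F) :=
    of fun i j => ∏ k ∈ univ.erase j, (X i - C (μ k)) ^ 2
  have hyc : ∀ i j, (y i - c j) ^ 2 ≠ 0 := fun i j => by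
    simpa [y, c, ← map_sub] using X_sub_C_ne_zero i (μ j)
  have hP : eval μ P.det ≠ 0 := by
    rw [RingHom.map_det, show (eval μ).mapMatrix P =
      of fun i j => ∏ k ∈ univ.erase j, (μ i - μ k) ^ 2 by ext; simp [P]]
    exact det_of_prod_erase_sq_sub_ne_zero hinj
  have hclear := det_of_inv_mul_prod _ hyc
  rw [show (of fun i j => ∏ k ∈ univ.erase j, (y i - c k) ^ 2) = (algebraMap _ K).mapMatrix P by
    ext; simp [P, y, c], ← RingHom.map_det] at hclear
  intro h
  rw [h, zero_mul, eq_comm, map_eq_zero_iff _ (IsFractionRing.injective _ K)] at hclear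
  exact hP (by rw [hclear, map_zero])

/-- For a field `F` (characteristic 0 suffices) and distinct nonzero
`μ₁,…,μ_d ∈ F`, the `d×d` matrix over the rational function field `F(y₁,…,y_d)`
with `(i,j)` entry `1/(y_i - μ_j)²` has nonzero determinant. -/
theorem stmt0 (F : Type*) [Field F] [CharZero F] (d : ℕ)
    (μ : Fin d → F) (hinj : Function.Injective μ) (hne : ∀ j, μ j ≠ 0) :
    let K := FractionRing (MvPolynomial (Fin d) F)
    let y : Fin d → K := fun i => algebraMap (MvPolynomial (Fin d) F) K (MvPolynomial.X i)
    let c : Fin d → K := fun j => algebraMap (MvPolynomial (Fin d) F) K (MvPolynomial.C (μ j))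
    Matrix.det (Matrix.of fun i j => ((y i - c j) ^ 2)⁻¹) ≠ 0 :=
  stmt0_general F d μ hinj
end

section
/- Let F be a field, δ ≥ 1, A ∈ F[x₁,...,x_n] a polynomial of total degree < δ with A(0) = μ ≠ 0, and B ∈ F[x₁,...,x_n] a homogeneous polynomial of degree δ. Let y ∈ F with y ≠ μ. Then in the quotient ring F[[x₁,...,x_n]]/⟨x₁,...,x_n⟩^{δ+1}, the elements y − (A+B) and y − A are invertible and 1/(y−(A+B)) ≡ 1/(y−A) + B/(y−μ)² (mod ⟨x₁,...,x_n⟩^{δ+1}). -/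
/-!
Write `u = y - A` and `b = B` in the quotient. Since `B ∈ I^δ` and `A - μ ∈ I`, both `b²` and
`b (A - μ)` vanish modulo `I^(δ+1)`, so `b u = (y - μ) b`. Hence `b u⁻¹ = b / (y - μ)` and
`(u - b)(u⁻¹ + b / (y - μ)²) = 1`.
-/

open MvPolynomial

theorem Ring.inverse_sub_of_mul_self_eq_zero {R : Type*} [CommRing R] {u b c k : R}
    (hu : IsUnit u) (hb : b * b = 0) (hbu : b * u = b * c) (hck : c ^ 2 * k = 1) :
    IsUnit (u - b) ∧ Ring.inverse (u - b) = Ring.inverse u + b * k := by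
  have hinv : (u - b) * (Ring.inverse u + b * k) = 1 := by
    linear_combination (1 - b * c * k) * Ring.mul_inverse_cancel u hu
      + (k + Ring.inverse u * c * k) * hbu + b * Ring.inverse u * hck - k * hb
  have hunit : IsUnit (u - b) := .of_mul_eq_one _ hinv
  exact ⟨hunit, by simpa using (Ring.inverse_mul_eq_iff_eq_mul _ 1 _ hunit).2 hinv.symm⟩

theorem MvPolynomial.coe_mem_pow_span_X {σ R : Type*} [CommSemiring R] {p : MvPolynomial σ R}
    {k : ℕ} (hp : p ∈ idealOfVars σ R ^ k) :
    (p : MvPowerSeries σ R) ∈ Ideal.span (Set.range MvPowerSeries.X) ^ k := by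
  have hmap : (idealOfVars σ R).map coeToMvPowerSeries.ringHom =
      Ideal.span (Set.range MvPowerSeries.X) := by
    rw [Ideal.map_span, ← Set.range_comp]
    congr 2
    ext i
    simp
  rw [← hmap, ← Ideal.map_pow]
  exact Ideal.mem_map_of_mem _ hp

theorem MvPolynomial.IsHomogeneous.mem_pow_idealOfVars {σ R : Type*} [CommSemiring R]
    {p : MvPolynomial σ R} {n : ℕ} (hp : p.IsHomogeneous n) : p ∈ idealOfVars σ R ^ n := by
  rw [mem_pow_idealOfVars_iff']
  intro d hd
  exact hp.coeff_eq_zero hd.ne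

theorem MvPolynomial.sub_C_coeff_zero_mem_idealOfVars {σ R : Type*} [CommRing R]
    (p : MvPolynomial σ R) : p - C (coeff 0 p) ∈ idealOfVars σ R := by
  rw [← pow_one (idealOfVars σ R), mem_pow_idealOfVars_iff']
  intro d hd
  obtain rfl : d = 0 := by simpa [Finsupp.degree_eq_zero_iff] using hd
  simp

theorem stmt3_general (F : Type*) [Field F] (n δ : ℕ) (hδ : 1 ≤ δ)
    (A B : MvPolynomial (Fin n) F) (μ : F)
    (hμ0 : MvPolynomial.coeff 0 A = μ)
    (hB : B.IsHomogeneous δ) (y : F) (hy : y ≠ μ) :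
    let R := MvPowerSeries (Fin n) F
    let I : Ideal R := Ideal.span (Set.range (MvPowerSeries.X : Fin n → R))
    let Q := R ⧸ (I ^ (δ + 1))
    let π : R →+* Q := Ideal.Quotient.mk (I ^ (δ + 1))
    let ι : MvPolynomial (Fin n) F →+* R := MvPolynomial.coeToMvPowerSeries.ringHom
    let u : Q := π (MvPowerSeries.C (σ := Fin n) (R := F) y - ι A)
    let v : Q := π (MvPowerSeries.C (σ := Fin n) (R := F) y - ι (A + B))
    IsUnit u ∧ IsUnit v ∧
      Ring.inverse v = Ring.inverse u + π (ι B) * π (MvPowerSeries.C (σ := Fin n) (R := F) (((y - μ) ^ 2)⁻¹)) := by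
  intro R I Q π ι u v
  have hπ : ∀ p ∈ idealOfVars (Fin n) F ^ (δ + 1), π (ι p) = 0 := fun p hp =>
    Ideal.Quotient.eq_zero_iff_mem.2 (coe_mem_pow_span_X hp)
  have hBδ := hB.mem_pow_idealOfVars
  have hu : IsUnit u := by
    refine .map π (MvPowerSeries.isUnit_iff_constantCoeff.2 ?_)
    rw [map_sub, MvPowerSeries.constantCoeff_C, ← MvPowerSeries.coeff_zero_eq_constantCoeff_apply,
      coeToMvPowerSeries.ringHom_apply, coeff_coe, hμ0]
    exact (sub_ne_zero.2 hy).isUnit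
  have hb : π (ι B) * π (ι B) = 0 := by
    rw [← map_mul, ← map_mul]
    exact hπ _ (Ideal.pow_le_pow_right (by omega) (pow_add (idealOfVars _ F) δ δ ▸
      Ideal.mul_mem_mul hBδ hBδ))
  have hbu : π (ι B) * u = π (ι B) * π (MvPowerSeries.C (y - μ)) := by
    have hBA := hπ _ (pow_succ (idealOfVars _ F) δ ▸
      Ideal.mul_mem_mul hBδ (sub_C_coeff_zero_mem_idealOfVars A))
    have hιC : ι (C μ) = MvPowerSeries.C μ := coe_C μ
    simp only [map_mul, map_sub, hμ0, hιC] at hBA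
    simp only [u, map_sub]
    linear_combination -hBA
  have hck : π (MvPowerSeries.C (y - μ)) ^ 2 * π (MvPowerSeries.C ((y - μ) ^ 2)⁻¹) = 1 := by
    rw [← map_pow, ← map_mul, ← map_pow, ← map_mul, mul_inv_cancel₀ (by simpa [sub_eq_zero]),
      map_one, map_one]
  have hvu : v = u - π (ι B) := by
    simp only [u, v, map_add, map_sub]
    ring
  rw [hvu]
  exact ⟨hu, Ring.inverse_sub_of_mul_self_eq_zero hu hb hbu hck⟩

/-- Series inverse lemma. For `δ ≥ 1`, `A` a polynomial of total degree `< δ`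
with constant term `μ ≠ 0`, `B` homogeneous of degree `δ`, and `y ∈ F` with `y ≠ μ`:
in `F[[x₁,…,x_n]]/⟨x̄⟩^{δ+1}`, both `y − (A+B)` and `y − A` are invertible and
`1/(y−(A+B)) = 1/(y−A) + B/(y−μ)²`. -/
theorem stmt3 (F : Type*) [Field F] (n δ : ℕ) (hδ : 1 ≤ δ)
    (A B : MvPolynomial (Fin n) F) (μ : F)
    (hA : A.totalDegree < δ) (hμ0 : MvPolynomial.coeff 0 A = μ) (hμ : μ ≠ 0)
    (hB : B.IsHomogeneous δ) (y : F) (hy : y ≠ μ) :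
    let R := MvPowerSeries (Fin n) F
    let I : Ideal R := Ideal.span (Set.range (MvPowerSeries.X : Fin n → R))
    let Q := R ⧸ (I ^ (δ + 1))
    let π : R →+* Q := Ideal.Quotient.mk (I ^ (δ + 1))
    let ι : MvPolynomial (Fin n) F →+* R := MvPolynomial.coeToMvPowerSeries.ringHom
    let u : Q := π (MvPowerSeries.C (σ := Fin n) (R := F) y - ι A)
    let v : Q := π (MvPowerSeries.C (σ := Fin n) (R := F) y - ι (A + B))
    IsUnit u ∧ IsUnit v ∧
      Ring.inverse v = Ring.inverse u + π (ι B) * π (MvPowerSeries.C (σ := Fin n) (R := F) (((y - μ) ^ 2)⁻¹)) :=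
  stmt3_general F n δ hδ A B μ hμ0 hB y hy
end

section
/- Let F be a field of characteristic 0, and let f = (y−g)^e · h in F[[x₁,...,x_n]][y], where g ∈ F[[x̄]], e ≥ 1, and h ∈ F[[x̄]][y] satisfies h(x̄, g) ≢ 0 mod ⟨x̄⟩ (i.e., the constant term of h evaluated at y=g is nonzero). Suppose y_t ∈ F[[x̄]] with y_t ≡ g mod ⟨x̄⟩^{2^t} for some t ≥ 1. Then the ratio (f/∂_y f)|_{y=y_t} is a well-defined element of F[[x̄]], and y_{t+1} := y_t − e·(f/∂_y f)|_{y=y_t} satisfies y_{t+1} ≡ g mod ⟨x̄⟩^{2^{t+1}}. -/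
/-!
Write `d = y_t - g`. Evaluating `f = (y - g)^e h` and its derivative at `y_t` gives
`f(y_t) = d^e h(y_t)` and `f'(y_t) = d^(e-1) u` with `u = e h(y_t) + d h'(y_t)`.
Since `d` lies in the maximal ideal of the local ring `F[[x̄]]`, `u ≡ e h(g)` is a unit, so
`q = d h(y_t) u⁻¹` solves `f'(y_t) q = f(y_t)`, and `y_t - e q - g = d² h'(y_t) u⁻¹`
lies in the square of any ideal containing `d`.
-/

open Polynomial IsLocalRing

section NewtonStep

variable {R : Type*} [CommRing R]

theorem derivative_X_sub_C_pow_mul (g : R) {e : ℕ} (he : 1 ≤ e) (h : R[X]) :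
    derivative ((X - C g) ^ e * h) =
      (X - C g) ^ (e - 1) * ((e : R[X]) * h + (X - C g) * derivative h) := by
  obtain ⟨k, rfl⟩ := Nat.exists_eq_add_of_le' he
  simp only [derivative_mul, derivative_X_sub_C_pow, Nat.add_sub_cancel, C_eq_natCast]
  push_cast
  ring

theorem exists_newton_step_sub_mem_sq {J : Ideal R} {g y : R} {e : ℕ} (he : 1 ≤ e) {h : R[X]}
    (hyg : y - g ∈ J) (hu : IsUnit ((e : R) * h.eval y + (y - g) * (derivative h).eval y)) :
    ∃ q : R, (derivative ((X - C g) ^ e * h)).eval y * q = ((X - C g) ^ e * h).eval y ∧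
      y - e * q - g ∈ J ^ 2 := by
  obtain ⟨u, hu⟩ := hu
  refine ⟨(y - g) * h.eval y * ↑u⁻¹, ?_, ?_⟩
  · rw [derivative_X_sub_C_pow_mul g he]
    simp only [eval_mul, eval_pow, eval_sub, eval_X, eval_C, eval_add, eval_natCast, ← hu]
    calc (y - g) ^ (e - 1) * ↑u * ((y - g) * h.eval y * ↑u⁻¹)
        = (y - g) ^ (e - 1) * (y - g) * h.eval y * (↑u * ↑u⁻¹) := by ring
      _ = (y - g) ^ e * h.eval y := by rw [Units.mul_inv, mul_one, pow_sub_one_mul (by omega)]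
  · have hstep : y - e * ((y - g) * h.eval y * ↑u⁻¹) - g =
        (y - g) * (y - g) * ((derivative h).eval y * ↑u⁻¹) := by
      calc y - e * ((y - g) * h.eval y * ↑u⁻¹) - g
          = (y - g) * (↑u * ↑u⁻¹) - e * ((y - g) * h.eval y * ↑u⁻¹) := by
            rw [Units.mul_inv, mul_one]; ring
        _ = (y - g) * (y - g) * ((derivative h).eval y * ↑u⁻¹) := by rw [hu]; ring
    rw [hstep, sq]
    exact Ideal.mul_mem_right _ _ (Ideal.mul_mem_mul hyg hyg)

theorem isUnit_nat_mul_eval_add_sub_mul_eval_derivative [IsLocalRing R] {g y : R} {e : ℕ}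
    {h : R[X]} (hyg : y - g ∈ maximalIdeal R) (hg : IsUnit ((e : R) * h.eval g)) :
    IsUnit ((e : R) * h.eval y + (y - g) * (derivative h).eval y) := by
  obtain ⟨c, hc⟩ := sub_dvd_eval_sub y g h
  have hdiff : (e : R) * h.eval y + (y - g) * (derivative h).eval y - e * h.eval g ∈
      maximalIdeal R := by
    have : (e : R) * h.eval y + (y - g) * (derivative h).eval y - e * h.eval g =
        (y - g) * (e * c + (derivative h).eval y) := by
      linear_combination (e : R) * hc
    rw [this]
    exact Ideal.mul_mem_right _ _ hyg
  rw [← notMem_maximalIdeal] at hg ⊢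
  exact fun hu => hg (by simpa using Ideal.sub_mem _ hu hdiff)

end NewtonStep

theorem MvPowerSeries.span_range_X_le_maximalIdeal (σ F : Type*) [Field F] :
    Ideal.span (Set.range (X : σ → MvPowerSeries σ F)) ≤ maximalIdeal (MvPowerSeries σ F) := by
  rw [Ideal.span_le]
  rintro _ ⟨i, rfl⟩
  simp [mem_maximalIdeal, mem_nonunits_iff, isUnit_iff_constantCoeff, constantCoeff_X]

theorem stmt6_general (F : Type*) [Field F] [CharZero F] (n : ℕ)
    (g : MvPowerSeries (Fin n) F) (e : ℕ) (he : 1 ≤ e)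
    (h f : Polynomial (MvPowerSeries (Fin n) F))
    (hf : f = (Polynomial.X - Polynomial.C g) ^ e * h)
    (hh : MvPowerSeries.constantCoeff (σ := Fin n) (R := F) (Polynomial.eval g h) ≠ 0)
    (t : ℕ) (yt : MvPowerSeries (Fin n) F)
    (hyt : yt - g ∈
      (Ideal.span (Set.range (MvPowerSeries.X : Fin n → MvPowerSeries (Fin n) F))) ^ (2 ^ t)) :
    ∃ q : MvPowerSeries (Fin n) F,
      Polynomial.eval yt (Polynomial.derivative f) * q = Polynomial.eval yt f ∧
      (yt - (e : MvPowerSeries (Fin n) F) * q) - g ∈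
        (Ideal.span (Set.range (MvPowerSeries.X : Fin n → MvPowerSeries (Fin n) F))) ^ (2 ^ (t + 1)) := by
  subst hf
  have hmax : yt - g ∈ maximalIdeal (MvPowerSeries (Fin n) F) :=
    MvPowerSeries.span_range_X_le_maximalIdeal (Fin n) F
      (Ideal.pow_le_self (pow_ne_zero t two_ne_zero) hyt)
  have hunit : IsUnit ((e : MvPowerSeries (Fin n) F) * h.eval g) := by
    rw [MvPowerSeries.isUnit_iff_constantCoeff, map_mul, map_natCast]
    exact (mul_ne_zero (Nat.cast_ne_zero.mpr (by omega)) hh).isUnit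
  rw [pow_succ, pow_mul]
  exact exists_newton_step_sub_mem_sq he hyt
    (isUnit_nat_mul_eval_add_sub_mul_eval_derivative hmax hunit)

/-- Newton iteration with multiplicity. Let `f = (y−g)^e·h` in `F[[x̄]][y]`,
char 0, with `h(g)` having nonzero constant term, `e ≥ 1`, and let `y_t ≡ g mod ⟨x̄⟩^{2^t}`
(`t ≥ 1`). Then the ratio `(f/∂_y f)|_{y=y_t}` exists in `F[[x̄]]` (there is `q` with
`(∂_y f)(y_t)·q = f(y_t)`) and `y_{t+1} := y_t − e·q` satisfies `y_{t+1} ≡ g mod ⟨x̄⟩^{2^{t+1}}`. -/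
theorem stmt6 (F : Type*) [Field F] [CharZero F] (n : ℕ)
    (g : MvPowerSeries (Fin n) F) (e : ℕ) (he : 1 ≤ e)
    (h f : Polynomial (MvPowerSeries (Fin n) F))
    (hf : f = (Polynomial.X - Polynomial.C g) ^ e * h)
    (hh : MvPowerSeries.constantCoeff (σ := Fin n) (R := F) (Polynomial.eval g h) ≠ 0)
    (t : ℕ) (ht : 1 ≤ t) (yt : MvPowerSeries (Fin n) F)
    (hyt : yt - g ∈
      (Ideal.span (Set.range (MvPowerSeries.X : Fin n → MvPowerSeries (Fin n) F))) ^ (2 ^ t)) :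
    ∃ q : MvPowerSeries (Fin n) F,
      Polynomial.eval yt (Polynomial.derivative f) * q = Polynomial.eval yt f ∧
      (yt - (e : MvPowerSeries (Fin n) F) * q) - g ∈
        (Ideal.span (Set.range (MvPowerSeries.X : Fin n → MvPowerSeries (Fin n) F))) ^ (2 ^ (t + 1)) :=
  stmt6_general F n g e he h f hf hh t yt hyt
end

section
/- Let F be a field and let f = ∏_{i=1}^{d₀}(y − g_i)^{γ_i} in F[[x₁,...,x_n]][y] with γ_i > 0, g_i ∈ F[[x̄]], and with the constant terms μ_i := g_i(0̄) pairwise distinct. Fix δ ≥ 1 and let y = c ∈ F be distinct from all μ_i. Write g_i^{<δ} for the truncation of g_i to degrees < δ and g_i^{=δ} for its degree-δ homogeneous part. Then ((∂_y f)/f)|_{y=c} ≡ ∑_{i=1}^{d₀} γ_i/(c − g_i^{<δ}) + ∑_{i=1}^{d₀} γ_i·g_i^{=δ}/(c − μ_i)² (mod ⟨x̄⟩^{δ+1}). -/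
/-- Truncation of a multivariate power series to (total) degrees `< δ`. -/
noncomputable def truncLT {F : Type*} [Field F] {n : ℕ} (δ : ℕ)
    (g : MvPowerSeries (Fin n) F) : MvPowerSeries (Fin n) F :=
  fun e => if (e.sum fun _ k => k) < δ then MvPowerSeries.coeff (R := F) e g else 0

/-- Degree-`δ` homogeneous part of a multivariate power series. -/
noncomputable def homPart {F : Type*} [Field F] {n : ℕ} (δ : ℕ)
    (g : MvPowerSeries (Fin n) F) : MvPowerSeries (Fin n) F :=
  fun e => if (e.sum fun _ k => k) = δ then MvPowerSeries.coeff (R := F) e g else 0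

/-!
Since every `c - g_i` is a unit, the logarithmic derivative of `f = ∏ (y - g_i)^{γ_i}` at
`y = c` is exactly `∑ γ_i / (c - g_i)`. Write `a = c - g_i`, `b = c - g_i^{<δ}`, `t = g_i^{=δ}`:
then `ab (1/a - 1/b - t/(c - μ_i)²) = (b - a - t) + t (1 - ab/(c - μ_i)²)`, where `b - a - t`
has order `> δ`, `t` has order `≥ δ` and `1 - ab/(c - μ_i)²` has no constant term.
-/

open Polynomial in
theorem Polynomial.eval_derivative_prod_mul_inverse {R ι : Type*} [CommRing R]
    (s : Finset ι) (p : ι → R[X]) (c : R) (hp : ∀ i ∈ s, IsUnit ((p i).eval c)) :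
    (derivative (∏ i ∈ s, p i)).eval c * Ring.inverse ((∏ i ∈ s, p i).eval c)
      = ∑ i ∈ s, (derivative (p i)).eval c * Ring.inverse ((p i).eval c) := by
  classical
  induction s using Finset.induction_on with
  | empty => simp
  | insert a s ha ih =>
    have hprod : IsUnit ((∏ i ∈ s, p i).eval c) := by
      rw [eval_prod]
      exact IsUnit.prod_iff.mpr fun i hi => hp i (Finset.mem_insert_of_mem hi)
    have ha' := hp a (Finset.mem_insert_self a s)
    rw [Finset.prod_insert ha, Finset.sum_insert ha, derivative_mul, eval_add, eval_mul, eval_mul,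
      eval_mul, Ring.mul_inverse_rev, ← ih fun i hi => hp i (Finset.mem_insert_of_mem hi)]
    linear_combination
      (eval c (derivative (p a)) * Ring.inverse (eval c (p a))) * Ring.mul_inverse_cancel _ hprod
      + (eval c (derivative (∏ i ∈ s, p i)) * Ring.inverse (eval c (∏ i ∈ s, p i)))
        * Ring.mul_inverse_cancel _ ha'

open Polynomial in
theorem Polynomial.eval_derivative_X_sub_C_pow_mul_inverse {R : Type*} [CommRing R]
    (a c : R) (k : ℕ) (h : IsUnit (c - a)) :
    (derivative ((X - C a) ^ k)).eval c * Ring.inverse (((X - C a) ^ k).eval c)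
      = k * Ring.inverse (c - a) := by
  simp only [derivative_X_sub_C_pow, eval_mul, eval_pow, eval_sub, eval_X, eval_C]
  cases k with
  | zero => simp
  | succ k =>
    rw [Nat.add_sub_cancel, ← Ring.inverse_pow, pow_succ, mul_assoc, ← mul_assoc ((c - a) ^ k),
      ← mul_pow, Ring.mul_inverse_cancel _ h, one_pow, one_mul]

theorem Ring.inverse_sub_inverse_sub_mul_mem {R : Type*} [CommRing R] {I J : Ideal R}
    {a b t w : R} (ha : IsUnit a) (hb : IsUnit b) (ht : t ∈ I) (hw : 1 - a * b * w ∈ J)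
    (hab : b - a - t ∈ I * J) :
    Ring.inverse a - Ring.inverse b - t * w ∈ I * J := by
  have key : Ring.inverse a - Ring.inverse b - t * w
      = Ring.inverse a * Ring.inverse b * ((b - a - t) + t * (1 - a * b * w)) := by
    linear_combination (Ring.inverse b + t * w * b * Ring.inverse b) * Ring.inverse_mul_cancel a ha
      + (t * w - Ring.inverse a) * Ring.inverse_mul_cancel b hb
  rw [key]
  exact Ideal.mul_mem_left _ _ (Ideal.add_mem _ hab (Ideal.mul_mem_mul ht hw))

namespace MvPowerSeries

open Finsupp

section span_X

variable {σ R : Type*} [CommSemiring R]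

theorem coeff_X_mul (i : σ) (φ : MvPowerSeries σ R) (e : σ →₀ ℕ) :
    coeff e (X i * φ) = if single i 1 ≤ e then coeff (e - single i 1) φ else 0 := by
  rw [X_def, coeff_monomial_mul, one_mul]

/-- Split each monomial of positive degree off at its smallest variable. -/
theorem exists_eq_sum_X_mul [Fintype σ] [LinearOrder σ] {m : ℕ} {h : MvPowerSeries σ R}
    (hh : ∀ e, degree e < m + 1 → coeff e h = 0) :
    ∃ q : σ → MvPowerSeries σ R,
      h = ∑ i, X i * q i ∧ ∀ i e, degree e < m → coeff e (q i) = 0 := by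
  classical
  let q : σ → MvPowerSeries σ R := fun i e =>
    if ∀ j < i, e j = 0 then coeff (e + single i 1) h else 0
  have coeff_q : ∀ i e,
      coeff e (q i) = if ∀ j < i, e j = 0 then coeff (e + single i 1) h else 0 := fun _ _ => rfl
  refine ⟨q, ext fun e => ?_, fun i e he => ?_⟩
  · rw [map_sum]
    by_cases he : e = 0
    · subst he
      rw [hh 0 (by simp)]
      refine (Finset.sum_eq_zero fun i _ => ?_).symm
      rw [coeff_X_mul, if_neg (by simp)]
    have hne : e.support.Nonempty := support_nonempty_iff.mpr he
    set i₀ := e.support.min' hne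
    have hi₀ : e i₀ ≠ 0 := mem_support_iff.mp (e.support.min'_mem hne)
    have hmin : ∀ j < i₀, e j = 0 := fun j hj => by
      by_contra hj'
      exact not_le.mpr hj (e.support.min'_le j (mem_support_iff.mpr hj'))
    rw [Finset.sum_eq_single i₀ _ (by simp)]
    · have hle : single i₀ 1 ≤ e := single_le_iff.mpr (Nat.one_le_iff_ne_zero.mpr hi₀)
      rw [coeff_X_mul, if_pos hle, coeff_q, if_pos fun j hj => by simp [hmin j hj],
        tsub_add_cancel_of_le hle]
    · intro i _ hi
      rw [coeff_X_mul]
      split_ifs with hle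
      · rw [coeff_q, if_neg]
        intro hall
        have hlt : i₀ < i := lt_of_le_of_ne (e.support.min'_le i
          (mem_support_iff.mpr (Nat.one_le_iff_ne_zero.mp (single_le_iff.mp hle)))) (Ne.symm hi)
        exact hi₀ (by simpa [single_apply, hi.symm] using hall i₀ hlt)
      · rfl
  · rw [coeff_q]
    split_ifs
    · exact hh _ (by simpa [degree_single] using he)
    · rfl

theorem mem_pow_span_X_of_coeff_eq_zero [Finite σ] {m : ℕ} {h : MvPowerSeries σ R}
    (hh : ∀ e, degree e < m → coeff e h = 0) :
    h ∈ Ideal.span (Set.range (X : σ → MvPowerSeries σ R)) ^ m := by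
  have := Fintype.ofFinite σ
  let := LinearOrder.lift' _ (Fintype.equivFin σ).injective
  induction m generalizing h with
  | zero => simp
  | succ m ih =>
    obtain ⟨q, rfl, hq⟩ := exists_eq_sum_X_mul hh
    refine Ideal.sum_mem _ fun i _ => ?_
    rw [pow_succ']
    exact Ideal.mul_mem_mul (Ideal.subset_span ⟨i, rfl⟩) (ih (hq i))

end span_X

theorem isUnit_C_sub {σ F : Type*} [Field F] {c : F} {g : MvPowerSeries σ F}
    (hc : c ≠ constantCoeff g) : IsUnit (C c - g) := by
  rw [isUnit_iff_constantCoeff, map_sub, constantCoeff_C]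
  exact (sub_ne_zero.mpr hc).isUnit

end MvPowerSeries

section truncation

open MvPowerSeries Finsupp

variable {F : Type*} [Field F] {n : ℕ}

theorem coeff_truncLT (δ : ℕ) (g : MvPowerSeries (Fin n) F) (e : Fin n →₀ ℕ) :
    coeff e (truncLT δ g) = if degree e < δ then coeff e g else 0 := rfl

theorem coeff_homPart (δ : ℕ) (g : MvPowerSeries (Fin n) F) (e : Fin n →₀ ℕ) :
    coeff e (homPart δ g) = if degree e = δ then coeff e g else 0 := rfl

theorem constantCoeff_truncLT {δ : ℕ} (hδ : 1 ≤ δ) (g : MvPowerSeries (Fin n) F) :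
    constantCoeff (truncLT δ g) = constantCoeff g := by
  rw [← coeff_zero_eq_constantCoeff_apply, coeff_truncLT, if_pos (by rwa [map_zero]),
    coeff_zero_eq_constantCoeff_apply]

theorem homPart_mem_pow (δ : ℕ) (g : MvPowerSeries (Fin n) F) :
    homPart δ g ∈ Ideal.span (Set.range (X : Fin n → MvPowerSeries (Fin n) F)) ^ δ :=
  mem_pow_span_X_of_coeff_eq_zero fun e he => by rw [coeff_homPart, if_neg he.ne]

theorem sub_truncLT_sub_homPart_mem_pow (δ : ℕ) (g : MvPowerSeries (Fin n) F) :
    g - truncLT δ g - homPart δ g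
      ∈ Ideal.span (Set.range (X : Fin n → MvPowerSeries (Fin n) F)) ^ (δ + 1) :=
  mem_pow_span_X_of_coeff_eq_zero fun e he => by
    rw [map_sub, map_sub, coeff_truncLT, coeff_homPart]
    rcases Nat.lt_or_eq_of_le (Nat.lt_succ_iff.mp he) with hlt | heq
    · rw [if_pos hlt, if_neg hlt.ne, sub_self, sub_zero]
    · rw [if_neg heq.not_lt, if_pos heq, sub_zero, sub_self]

theorem inverse_C_sub_sub_inverse_C_sub_truncLT_mem_pow {δ : ℕ} (hδ : 1 ≤ δ)
    {g : MvPowerSeries (Fin n) F} {c : F} (hc : c ≠ constantCoeff g) :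
    Ring.inverse (C c - g) - Ring.inverse (C c - truncLT δ g)
        - homPart δ g * C (((c - constantCoeff g) ^ 2)⁻¹)
      ∈ Ideal.span (Set.range (X : Fin n → MvPowerSeries (Fin n) F)) ^ (δ + 1) := by
  have hc' : c ≠ constantCoeff (truncLT δ g) := by rwa [constantCoeff_truncLT hδ]
  rw [pow_succ]
  refine Ring.inverse_sub_inverse_sub_mul_mem (isUnit_C_sub hc) (isUnit_C_sub hc')
    (homPart_mem_pow δ g) ?_ ?_
  · rw [← pow_one (Ideal.span (Set.range (X : Fin n → MvPowerSeries (Fin n) F)))]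
    refine mem_pow_span_X_of_coeff_eq_zero fun e he => ?_
    rw [Nat.lt_one_iff, degree_eq_zero_iff] at he
    subst he
    rw [coeff_zero_eq_constantCoeff_apply]
    simp [constantCoeff_truncLT hδ, ← sq, sub_ne_zero.mpr hc]
  · rw [← pow_succ]
    convert sub_truncLT_sub_homPart_mem_pow δ g using 1
    ring

end truncation

theorem stmt8_general (F : Type*) [Field F] (n d₀ : ℕ)
    (g : Fin d₀ → MvPowerSeries (Fin n) F) (γ : Fin d₀ → ℕ)
    (μ : Fin d₀ → F) (hμ : ∀ i, μ i = MvPowerSeries.constantCoeff (σ := Fin n) (R := F) (g i))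
    (f : Polynomial (MvPowerSeries (Fin n) F))
    (hf : f = ∏ i : Fin d₀, (Polynomial.X - Polynomial.C (g i)) ^ (γ i))
    (δ : ℕ) (hδ : 1 ≤ δ) (c : F) (hc : ∀ i, c ≠ μ i) :
    let R := MvPowerSeries (Fin n) F
    let C : F →+* R := MvPowerSeries.C (σ := Fin n) (R := F)
    let I : Ideal R := Ideal.span (Set.range (MvPowerSeries.X : Fin n → R))
    Polynomial.eval (C c) (Polynomial.derivative f) * Ring.inverse (Polynomial.eval (C c) f)
      - ((∑ i : Fin d₀, (γ i : R) * Ring.inverse (C c - truncLT δ (g i)))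
        + ∑ i : Fin d₀, (γ i : R) * homPart δ (g i) * C (((c - μ i) ^ 2)⁻¹))
      ∈ I ^ (δ + 1) := by
  intro R C I
  obtain rfl : μ = fun i => MvPowerSeries.constantCoeff (g i) := funext hμ
  have hunit : ∀ i, IsUnit (C c - g i) := fun i => MvPowerSeries.isUnit_C_sub (hc i)
  have log_deriv :
      Polynomial.eval (C c) (Polynomial.derivative f) * Ring.inverse (Polynomial.eval (C c) f)
        = ∑ i, (γ i : R) * Ring.inverse (C c - g i) := by
    rw [hf, Polynomial.eval_derivative_prod_mul_inverse _ _ _ fun i _ => by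
      simpa using (hunit i).pow (γ i)]
    exact Finset.sum_congr rfl fun i _ =>
      Polynomial.eval_derivative_X_sub_C_pow_mul_inverse _ _ _ (hunit i)
  rw [log_deriv, ← Finset.sum_add_distrib, ← Finset.sum_sub_distrib]
  refine Ideal.sum_mem _ fun i _ => ?_
  convert (I ^ (δ + 1)).mul_mem_left (γ i : R)
    (inverse_C_sub_sub_inverse_C_sub_truncLT_mem_pow hδ (hc i)) using 1
  ring

/-- The allRootsNI recurrence. With `f = ∏(y−g_i)^{γ_i}`, constant terms
`μ_i = g_i(0̄)` pairwise distinct, `δ ≥ 1`, and `c ∈ F` distinct from all `μ_i`: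
`((∂_y f)/f)|_{y=c} ≡ ∑ γ_i/(c − g_i^{<δ}) + ∑ γ_i·g_i^{=δ}/(c−μ_i)²  (mod ⟨x̄⟩^{δ+1})`. -/
theorem stmt8 (F : Type*) [Field F] (n d₀ : ℕ)
    (g : Fin d₀ → MvPowerSeries (Fin n) F) (γ : Fin d₀ → ℕ) (hγ : ∀ i, 0 < γ i)
    (μ : Fin d₀ → F) (hμ : ∀ i, μ i = MvPowerSeries.constantCoeff (σ := Fin n) (R := F) (g i))
    (hdist : Function.Injective μ)
    (f : Polynomial (MvPowerSeries (Fin n) F))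
    (hf : f = ∏ i : Fin d₀, (Polynomial.X - Polynomial.C (g i)) ^ (γ i))
    (δ : ℕ) (hδ : 1 ≤ δ) (c : F) (hc : ∀ i, c ≠ μ i) :
    let R := MvPowerSeries (Fin n) F
    let C : F →+* R := MvPowerSeries.C (σ := Fin n) (R := F)
    let I : Ideal R := Ideal.span (Set.range (MvPowerSeries.X : Fin n → R))
    Polynomial.eval (C c) (Polynomial.derivative f) * Ring.inverse (Polynomial.eval (C c) f)
      - ((∑ i : Fin d₀, (γ i : R) * Ring.inverse (C c - truncLT δ (g i)))
        + ∑ i : Fin d₀, (γ i : R) * homPart δ (g i) * C (((c - μ i) ^ 2)⁻¹))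
      ∈ I ^ (δ + 1) :=
  stmt8_general F n d₀ g γ μ hμ f hf δ hδ c hc
end
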